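/- Let U, V be Hopf algebras with bijective antipodes, in duality, with a bialgebra morphism γ : V → U^cop satisfying the projection condition, and let π(m ⊗ x) = mγ(x) be the resulting Hopf algebra projection from D = D(U^cop, V) onto U^cop. Let B = {a ∈ D : a₁ ⊗ π(a₂) = a ⊗ 1}. Then the map θ : V → B defined by θ(y) = S_U(γ(y₂)) ⊗ y₁ is a linear bijection. -/

import Mathlib

open TensorProduct Coalgebra

noncomputable section

/-- Convolution product of two `k`-valued functionals on a coalgebra. -/
def conv {k C : Type*} [CommRing k] [AddCommGroup C] [Module k C] [CoalgebraStruct k C]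
    (f g : C →ₗ[k] k) : C →ₗ[k] k :=
  LinearMap.mul' k k ∘ₗ TensorProduct.map f g ∘ₗ CoalgebraStruct.comul

variable {k U V : Type*} [CommRing k] [Ring U] [Ring V] [HopfAlgebra k U] [HopfAlgebra k V]

/-- The comultiplication of the coalgebra `U^cop ⊗ V` (the coalgebra of `D(U^cop, V)`). -/
def comulCop : U ⊗[k] V →ₗ[k] (U ⊗[k] V) ⊗[k] (U ⊗[k] V) :=
  (TensorProduct.tensorTensorTensorComm k U U V V).toLinearMap ∘ₗ
    TensorProduct.map ((TensorProduct.comm k U U).toLinearMap ∘ₗ Coalgebra.comul)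
      Coalgebra.comul

/-- The projection `π(m ⊗ x) = m γ(x)`. -/
def piMap (γ : V →ₗ[k] U) : U ⊗[k] V →ₗ[k] U :=
  LinearMap.mul' k U ∘ₗ γ.lTensor U

/-- The map `θ(y) = S_U(γ(y₂)) ⊗ y₁`. -/
def thetaMap (γ : V →ₗ[k] U) : V →ₗ[k] U ⊗[k] V :=
  TensorProduct.map (HopfAlgebra.antipode (R := k) ∘ₗ γ) LinearMap.id ∘ₗ
    (TensorProduct.comm k V V).toLinearMap ∘ₗ Coalgebra.comul

/-!
Write `S` for the antipode of `U`. Because `γ : V → U^cop` is a coalgebra map, so is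
`S ∘ γ : V → U` (the antipode reverses comultiplication), and
`S γ(y₂) γ(y₁) = γ(y₂) S γ(y₁) = ε(y)`.

The first identity cancels the two middle legs of `Δ_D(θ y)`, so `θ(y) ∈ B`. Injectivity comes
from `(ε ⊗ id) ∘ θ = id`. For surjectivity, the map `a ⊗ n ↦ n · θ((ε ⊗ id) a)` sends
`a₁ ⊗ π(a₂)` back to `a`; this uses the second identity. For `a ∈ B` we have
`a₁ ⊗ π(a₂) = a ⊗ 1`, so `a = θ((ε ⊗ id) a)`.
-/

section MiddleContraction
variable {R A M B : Type*} [CommSemiring R] [AddCommMonoid A] [Module R A] [Coalgebra R A]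
  [AddCommMonoid M] [Module R M] [Semiring B] [Algebra R B]

/-- In Sweedler notation: `F(a₁ ⊗ a₄) ⊗ G(a₂ ⊗ a₃) = F(a₁ ⊗ a₂) ⊗ 1` whenever
`G(b₁ ⊗ b₂) = ε(b)`. -/
theorem map_comp_tensorTensorTensorComm_comp_map_comul_comul_of_comp_comul
    (F : A ⊗[R] A →ₗ[R] M) {G : A ⊗[R] A →ₗ[R] B}
    (hG : G ∘ₗ comul = Algebra.linearMap R B ∘ₗ counit) :
    map F G ∘ₗ (tensorTensorTensorComm R A A A A).toLinearMap ∘ₗ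
      map comul ((TensorProduct.comm R A A).toLinearMap ∘ₗ comul) ∘ₗ comul =
    (TensorProduct.mk R M B).flip 1 ∘ₗ F ∘ₗ comul := by
  have hperm : (tensorTensorTensorComm R A A A A).toLinearMap ∘ₗ
      map LinearMap.id (TensorProduct.comm R A A).toLinearMap ∘ₗ
      (TensorProduct.assoc R (A ⊗[R] A) A A).toLinearMap ∘ₗ
      (TensorProduct.assoc R A A A).symm.toLinearMap.rTensor A =
      (TensorProduct.rightComm R A (A ⊗[R] A) A).toLinearMap := by
    ext; simp
  have hmiddle : (map F G ∘ₗ (TensorProduct.rightComm R A (A ⊗[R] A) A).toLinearMap) ∘ₗ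
      (comul.lTensor A).rTensor A =
      map F (G ∘ₗ comul) ∘ₗ (TensorProduct.rightComm R A A A).toLinearMap :=
    TensorProduct.ext_threefold fun w b z => by simp
  have hcounit : map F (Algebra.linearMap R B ∘ₗ counit) ∘ₗ
      (TensorProduct.rightComm R A A A).toLinearMap =
      (TensorProduct.mk R M B).flip 1 ∘ₗ F ∘ₗ
        ((TensorProduct.rid R A).toLinearMap ∘ₗ counit.lTensor A).rTensor A :=
    TensorProduct.ext_threefold fun x y z => by
      simp [TensorProduct.smul_tmul, Algebra.algebraMap_eq_smul_one]
  have hid : ((TensorProduct.rid R A).toLinearMap ∘ₗ counit.lTensor A).rTensor A ∘ₗ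
      comul.rTensor A ∘ₗ comul = comul (R := R) (A := A) := by
    rw [← LinearMap.comp_assoc, ← LinearMap.rTensor_comp, LinearMap.comp_assoc,
      lTensor_counit_comp_comul,
      show (TensorProduct.rid R A).toLinearMap ∘ₗ (TensorProduct.mk R A R).flip 1 = .id by
        ext; simp,
      LinearMap.rTensor_id, LinearMap.id_comp]
  calc _ = map F G ∘ₗ ((tensorTensorTensorComm R A A A A).toLinearMap ∘ₗ
        map LinearMap.id (TensorProduct.comm R A A).toLinearMap ∘ₗ
        (TensorProduct.assoc R (A ⊗[R] A) A A).toLinearMap ∘ₗ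
        (TensorProduct.assoc R A A A).symm.toLinearMap.rTensor A) ∘ₗ
        (comul.lTensor A).rTensor A ∘ₗ comul.rTensor A ∘ₗ comul := by
        simp only [coassoc_simps]
    _ = _ := by
      rw [hperm, ← LinearMap.comp_assoc, ← LinearMap.comp_assoc, hmiddle, hG, hcounit,
        LinearMap.comp_assoc, LinearMap.comp_assoc, hid]

end MiddleContraction

namespace HopfAlgebra
variable {R A : Type*} [CommSemiring R] [Semiring A] [HopfAlgebra R A]
open WithConv

/-- Both sides are convolution inverses of `comul`. -/
theorem comul_comp_antipode :
    comul ∘ₗ antipode R (A := A) =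
      map (antipode R) (antipode R) ∘ₗ (TensorProduct.comm R A A).toLinearMap ∘ₗ comul := by
  have hleft_inv : toConv (comul ∘ₗ antipode R (A := A)) * toConv comul = 1 := by
    have hmul :
        LinearMap.mul' R (A ⊗[R] A) ∘ₗ map comul comul = comul ∘ₗ LinearMap.mul' R A := by
      ext; simp
    apply WithConv.ofConv_injective
    calc LinearMap.mul' R (A ⊗[R] A) ∘ₗ map (comul ∘ₗ antipode R) comul ∘ₗ comul
        = (LinearMap.mul' R (A ⊗[R] A) ∘ₗ map comul comul) ∘ₗ
            (antipode R).rTensor A ∘ₗ comul := by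
          simp only [LinearMap.rTensor, LinearMap.comp_assoc,
            CoassocSimps.TensorProduct.map_comp_assoc, LinearMap.comp_id]
      _ = comul ∘ₗ Algebra.linearMap R A ∘ₗ counit := by
          rw [hmul, LinearMap.comp_assoc, mul_antipode_rTensor_comul]
      _ = Algebra.linearMap R (A ⊗[R] A) ∘ₗ counit := by ext; simp
  have hright_inv : toConv comul * toConv (map (antipode R) (antipode R) ∘ₗ
      (TensorProduct.comm R A A).toLinearMap ∘ₗ comul (A := A)) = 1 := by
    have hmul :
        LinearMap.mul' R (A ⊗[R] A) ∘ₗ map LinearMap.id (map (antipode R) (antipode R)) =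
        map (LinearMap.mul' R A ∘ₗ (antipode R).lTensor A)
            (LinearMap.mul' R A ∘ₗ (antipode R).lTensor A) ∘ₗ
          (tensorTensorTensorComm R A A A A).toLinearMap := by
      ext; simp
    apply WithConv.ofConv_injective
    calc LinearMap.mul' R (A ⊗[R] A) ∘ₗ map comul (map (antipode R) (antipode R) ∘ₗ
          (TensorProduct.comm R A A).toLinearMap ∘ₗ comul) ∘ₗ comul
        = (LinearMap.mul' R (A ⊗[R] A) ∘ₗ
              map LinearMap.id (map (antipode R) (antipode R))) ∘ₗ
            map comul ((TensorProduct.comm R A A).toLinearMap ∘ₗ comul) ∘ₗ comul := by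
          simp only [LinearMap.comp_assoc, CoassocSimps.TensorProduct.map_comp_assoc,
            LinearMap.id_comp]
      _ = (TensorProduct.mk R A A).flip 1 ∘ₗ
            (LinearMap.mul' R A ∘ₗ (antipode R).lTensor A) ∘ₗ comul := by
          rw [hmul, LinearMap.comp_assoc,
            map_comp_tensorTensorTensorComm_comp_map_comul_comul_of_comp_comul _
              mul_antipode_lTensor_comul]
      _ = Algebra.linearMap R (A ⊗[R] A) ∘ₗ counit := by
          rw [LinearMap.comp_assoc comul, mul_antipode_lTensor_comul]
          ext; simp
  exact congrArg ofConv (left_inv_eq_right_inv hleft_inv hright_inv)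

end HopfAlgebra

section AntiCoalgebraMap
variable {R C A : Type*} [CommSemiring R] [AddCommMonoid C] [Module R C] [Coalgebra R C]
  [Semiring A] [HopfAlgebra R A] {f : C →ₗ[R] A}

theorem map_comp_comm_comp_comul_of_comm_comp_comul_comp
    (hf : (TensorProduct.comm R A A).toLinearMap ∘ₗ comul ∘ₗ f = map f f ∘ₗ comul) :
    map f f ∘ₗ (TensorProduct.comm R C C).toLinearMap ∘ₗ comul = comul ∘ₗ f := by
  rw [← LinearMap.comp_assoc, map_comp_comm_eq, LinearMap.comp_assoc, ← hf]
  ext; simp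

theorem comul_comp_antipode_comp
    (hf : (TensorProduct.comm R A A).toLinearMap ∘ₗ comul ∘ₗ f = map f f ∘ₗ comul) :
    comul ∘ₗ HopfAlgebra.antipode R ∘ₗ f =
      map (HopfAlgebra.antipode R ∘ₗ f) (HopfAlgebra.antipode R ∘ₗ f) ∘ₗ comul := by
  rw [← LinearMap.comp_assoc, HopfAlgebra.comul_comp_antipode, LinearMap.comp_assoc,
    LinearMap.comp_assoc, hf, ← LinearMap.comp_assoc, ← map_comp]

theorem mul'_comp_map_antipode_comp_comp_comm_comp_comul
    (hf : (TensorProduct.comm R A A).toLinearMap ∘ₗ comul ∘ₗ f = map f f ∘ₗ comul)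
    (hfε : counit ∘ₗ f = counit) :
    LinearMap.mul' R A ∘ₗ map (HopfAlgebra.antipode R ∘ₗ f) f ∘ₗ
      (TensorProduct.comm R C C).toLinearMap ∘ₗ comul =
      Algebra.linearMap R A ∘ₗ counit := by
  rw [← LinearMap.rTensor_comp_map, LinearMap.comp_assoc,
    map_comp_comm_comp_comul_of_comm_comp_comul_comp hf, ← LinearMap.comp_assoc,
    ← LinearMap.comp_assoc, LinearMap.comp_assoc comul,
    HopfAlgebra.mul_antipode_rTensor_comul,
    LinearMap.comp_assoc, hfε]

theorem mul'_comp_map_comp_antipode_comp_comm_comp_comul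
    (hf : (TensorProduct.comm R A A).toLinearMap ∘ₗ comul ∘ₗ f = map f f ∘ₗ comul)
    (hfε : counit ∘ₗ f = counit) :
    LinearMap.mul' R A ∘ₗ map f (HopfAlgebra.antipode R ∘ₗ f) ∘ₗ
      (TensorProduct.comm R C C).toLinearMap ∘ₗ comul =
      Algebra.linearMap R A ∘ₗ counit := by
  rw [← LinearMap.lTensor_comp_map, LinearMap.comp_assoc,
    map_comp_comm_comp_comul_of_comm_comp_comul_comp hf, ← LinearMap.comp_assoc,
    ← LinearMap.comp_assoc, LinearMap.comp_assoc comul,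
    HopfAlgebra.mul_antipode_lTensor_comul,
    LinearMap.comp_assoc, hfε]

end AntiCoalgebraMap

section CounitTensorId
variable {R C M : Type*} [CommSemiring R] [AddCommMonoid C] [Module R C] [Coalgebra R C]
  [AddCommMonoid M] [Module R M]

theorem Coalgebra.sum_counit_right_smul {ι : Type*} {c : C} (r : Repr R c ι) :
    ∑ i ∈ r.index, counit (R := R) (r.right i) • r.left i = c := by
  simpa only [map_sum, rid_tmul, one_smul] using
    congr((_root_.TensorProduct.rid R C) $(sum_tmul_counit_eq r))

def counitTensorId : C ⊗[R] M →ₗ[R] M := TensorProduct.lid R M ∘ₗ counit.rTensor M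

@[simp]
theorem counitTensorId_tmul (c : C) (m : M) :
    counitTensorId (c ⊗ₜ[R] m) = counit (R := R) c • m := by
  simp [counitTensorId]

end CounitTensorId

variable {γ : V →ₗ[k] U}

/-- On `x ⊗ y` both sides are `(S γ(y₂) ⊗ x₁) ⊗ S γ(y₁) γ(x₂)`. -/
theorem lTensor_piMap_comp_comulCop_comp_map_antipode_comp_comm
    (hγ : (TensorProduct.comm k U U).toLinearMap ∘ₗ comul ∘ₗ γ = map γ γ ∘ₗ comul) :
    (piMap γ).lTensor (U ⊗[k] V) ∘ₗ comulCop ∘ₗ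
        map (HopfAlgebra.antipode k ∘ₗ γ) LinearMap.id ∘ₗ
          (TensorProduct.comm k V V).toLinearMap =
      map (map (HopfAlgebra.antipode k ∘ₗ γ) LinearMap.id ∘ₗ
            (TensorProduct.comm k V V).toLinearMap)
          (LinearMap.mul' k U ∘ₗ map (HopfAlgebra.antipode k ∘ₗ γ) γ ∘ₗ
            (TensorProduct.comm k V V).toLinearMap) ∘ₗ
        (tensorTensorTensorComm k V V V V).toLinearMap ∘ₗ
        map comul ((TensorProduct.comm k V V).toLinearMap ∘ₗ comul) := by
  refine TensorProduct.ext' fun x y => ?_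
  have hS := LinearMap.congr_fun (comul_comp_antipode_comp hγ) y
  simp only [LinearMap.comp_apply] at hS
  simp only [comulCop, piMap, LinearMap.comp_apply, map_tmul, LinearEquiv.coe_coe, comm_tmul,
    LinearMap.id_apply, hS]
  induction (comul (R := k) x) using TensorProduct.induction_on with
  | zero => simp
  | add s t hs ht => simp_all [tmul_add, add_tmul]
  | tmul x₁ x₂ =>
    induction (comul (R := k) y) using TensorProduct.induction_on with
    | zero => simp
    | add s t hs ht => simp_all [tmul_add, add_tmul]
    | tmul y₁ y₂ => simp

theorem lTensor_piMap_comp_comulCop_comp_thetaMap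
    (hγ : (TensorProduct.comm k U U).toLinearMap ∘ₗ comul ∘ₗ γ = map γ γ ∘ₗ comul)
    (hγε : counit ∘ₗ γ = counit) :
    (piMap γ).lTensor (U ⊗[k] V) ∘ₗ comulCop ∘ₗ thetaMap γ =
      (TensorProduct.mk k (U ⊗[k] V) U).flip 1 ∘ₗ thetaMap γ :=
  calc _ = ((piMap γ).lTensor (U ⊗[k] V) ∘ₗ comulCop ∘ₗ
        map (HopfAlgebra.antipode k ∘ₗ γ) LinearMap.id ∘ₗ
        (TensorProduct.comm k V V).toLinearMap) ∘ₗ comul := rfl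
    _ = _ := by
      rw [lTensor_piMap_comp_comulCop_comp_map_antipode_comp_comm hγ, LinearMap.comp_assoc,
        LinearMap.comp_assoc,
        map_comp_tensorTensorTensorComm_comp_map_comul_comul_of_comp_comul _
          (mul'_comp_map_antipode_comp_comp_comm_comp_comul hγ hγε)]
      rfl

theorem counitTensorId_comp_thetaMap (hγε : counit ∘ₗ γ = counit) :
    counitTensorId ∘ₗ thetaMap γ = LinearMap.id := by
  ext y
  simp only [thetaMap, LinearMap.comp_apply, ← (ℛ k y).eq, map_sum, LinearEquiv.coe_coe,
    comm_tmul, map_tmul, counitTensorId_tmul, HopfAlgebra.counit_antipode, LinearMap.id_apply,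
    ← LinearMap.comp_apply counit γ, hγε, sum_counit_right_smul]

theorem thetaMap_apply {ι : Type*} (y : V) (r : Repr k y ι) :
    thetaMap γ y =
      ∑ i ∈ r.index, HopfAlgebra.antipode k (γ (r.right i)) ⊗ₜ[k] r.left i := by
  simp [thetaMap, ← r.eq]

theorem sum_smul_thetaMap
    (hγ : (TensorProduct.comm k U U).toLinearMap ∘ₗ comul ∘ₗ γ = map γ γ ∘ₗ comul)
    (hγε : counit ∘ₗ γ = counit) {ι : Type*} (x : V) (r : Repr k x ι) :
    ∑ i ∈ r.index, γ (r.right i) • thetaMap γ (r.left i) = 1 ⊗ₜ[k] x := by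
  have hcoassoc := congr(((TensorProduct.comm k V U).toLinearMap ∘ₗ
    (LinearMap.mul' k U ∘ₗ map γ (HopfAlgebra.antipode k ∘ₗ γ) ∘ₗ
      (TensorProduct.comm k V V).toLinearMap).lTensor V)
    $(sum_tmul_tmul_eq r (fun i => ℛ k (r.left i)) (fun i => ℛ k (r.right i))))
  simp only [map_sum, LinearMap.comp_apply, LinearMap.lTensor_tmul, LinearEquiv.coe_coe,
    comm_tmul, map_tmul, LinearMap.mul'_apply] at hcoassoc
  simp only [thetaMap_apply _ (ℛ k _), Finset.smul_sum, smul_tmul', smul_eq_mul]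
  rw [hcoassoc]
  conv_rhs => rw [← sum_counit_right_smul r, tmul_sum]
  refine Finset.sum_congr rfl fun i _ => ?_
  have hcontract := LinearMap.congr_fun
    (mul'_comp_map_comp_antipode_comp_comm_comp_comul hγ hγε) (r.right i)
  simp only [LinearMap.comp_apply, ← (ℛ k (r.right i)).eq, map_sum, LinearEquiv.coe_coe,
    comm_tmul, map_tmul, LinearMap.mul'_apply, Algebra.linearMap_apply] at hcontract
  rw [← sum_tmul, hcontract, Algebra.algebraMap_eq_smul_one, smul_tmul]

variable (γ) in
def smulThetaCounit : (U ⊗[k] V) ⊗[k] U →ₗ[k] U ⊗[k] V :=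
  TensorProduct.lift
    ((Algebra.lsmul k k (U ⊗[k] V)).toLinearMap.flip ∘ₗ thetaMap γ ∘ₗ counitTensorId)

@[simp]
theorem smulThetaCounit_tmul (a : U ⊗[k] V) (n : U) :
    smulThetaCounit γ (a ⊗ₜ n) = n • thetaMap γ (counitTensorId a) := rfl

theorem smulThetaCounit_comp_lTensor_piMap_comp_comulCop
    (hγ : (TensorProduct.comm k U U).toLinearMap ∘ₗ comul ∘ₗ γ = map γ γ ∘ₗ comul)
    (hγε : counit ∘ₗ γ = counit) :
    smulThetaCounit γ ∘ₗ (piMap γ).lTensor (U ⊗[k] V) ∘ₗ comulCop = LinearMap.id := by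
  refine TensorProduct.ext' fun m x => ?_
  set rm := ℛ k m
  set rx := ℛ k x
  calc _ = ∑ i ∈ rm.index, ∑ j ∈ rx.index,
          (rm.left i * γ (rx.right j)) •
            thetaMap γ (counit (R := k) (rm.right i) • rx.left j) := by
        simp only [comulCop, piMap, LinearMap.comp_apply, map_tmul, LinearEquiv.coe_coe, ← rm.eq,
          ← rx.eq, map_sum, sum_tmul, tmul_sum, comm_tmul, tensorTensorTensorComm_tmul,
          LinearMap.lTensor_tmul, LinearMap.mul'_apply, smulThetaCounit_tmul, counitTensorId_tmul]
        exact Finset.sum_comm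
    _ = (∑ i ∈ rm.index, counit (R := k) (rm.right i) • rm.left i) •
          ∑ j ∈ rx.index, γ (rx.right j) • thetaMap γ (rx.left j) := by
        simp only [Finset.sum_smul, Finset.smul_sum, map_smul, mul_smul, smul_assoc]
        rw [Finset.sum_comm]
        refine Finset.sum_congr rfl fun j _ => Finset.sum_congr rfl fun i _ => ?_
        rw [smul_comm (γ _) (counit (R := k) _), smul_comm (rm.left i) (counit (R := k) _)]
    _ = m ⊗ₜ x := by
        rw [sum_counit_right_smul, sum_smul_thetaMap hγ hγε, smul_tmul', smul_eq_mul, mul_one]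

theorem statement9_general {k U V : Type*} [Field k] [Ring U] [Ring V]
    [HopfAlgebra k U] [HopfAlgebra k V]
    (γ : V →ₗ[k] U)
    (hγcomul : ((TensorProduct.comm k U U).toLinearMap ∘ₗ Coalgebra.comul) ∘ₗ γ =
      TensorProduct.map γ γ ∘ₗ Coalgebra.comul)
    (hγcounit : (Coalgebra.counit (R := k) (A := U)) ∘ₗ γ = Coalgebra.counit) :
    (∀ y : V, (piMap γ).lTensor (U ⊗[k] V) (comulCop (thetaMap γ y)) =
        thetaMap γ y ⊗ₜ[k] (1 : U)) ∧
    Function.Injective (thetaMap γ) ∧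
    (∀ a : U ⊗[k] V,
      (piMap γ).lTensor (U ⊗[k] V) (comulCop a) = a ⊗ₜ[k] (1 : U) →
        ∃ y : V, thetaMap γ y = a) := by
  refine ⟨fun y => LinearMap.congr_fun
      (lTensor_piMap_comp_comulCop_comp_thetaMap hγcomul hγcounit) y,
    Function.LeftInverse.injective (g := counitTensorId)
      (LinearMap.congr_fun (counitTensorId_comp_thetaMap hγcounit)),
    fun a ha => ⟨counitTensorId a, ?_⟩⟩
  calc thetaMap γ (counitTensorId a)
      = smulThetaCounit γ (a ⊗ₜ[k] (1 : U)) := by rw [smulThetaCounit_tmul, one_smul]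
    _ = smulThetaCounit γ ((piMap γ).lTensor (U ⊗[k] V) (comulCop a)) := by rw [ha]
    _ = a := LinearMap.congr_fun
      (smulThetaCounit_comp_lTensor_piMap_comp_comulCop hγcomul hγcounit) a

/-- with `π(m ⊗ x) = m γ(x)` the resulting projection of
`D = D(U^cop, V)` onto `U^cop` and `B = {a ∈ D : a₁ ⊗ π(a₂) = a ⊗ 1}`,
the map `θ(y) = S_U(γ(y₂)) ⊗ y₁` is a linear bijection of `V` onto `B`. -/
theorem statement9 {k U V : Type*} [Field k] [Ring U] [Ring V]
    [HopfAlgebra k U] [HopfAlgebra k V]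
    (SinvU : U →ₗ[k] U) (SinvV : V →ₗ[k] V)
    (hSU : ∀ u : U, HopfAlgebra.antipode (R := k) (SinvU u) = u ∧
      SinvU (HopfAlgebra.antipode (R := k) u) = u)
    (hSV : ∀ v : V, HopfAlgebra.antipode (R := k) (SinvV v) = v ∧
      SinvV (HopfAlgebra.antipode (R := k) v) = v)
    (p : U →ₗ[k] V →ₗ[k] k)
    (hp1 : ∀ (m n : U) (x : V), p (m * n) x = conv (p m) (p n) x)
    (hp2 : ∀ (m : U) (x y : V), p m (x * y) = conv (p.flip x) (p.flip y) m)
    (hp3 : ∀ x : V, p 1 x = Coalgebra.counit x)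
    (hp4 : ∀ m : U, p m 1 = Coalgebra.counit m)
    (γ : V →ₗ[k] U)
    (hγmul : ∀ x y : V, γ (x * y) = γ x * γ y)
    (hγone : γ 1 = 1)
    (hγcomul : ((TensorProduct.comm k U U).toLinearMap ∘ₗ Coalgebra.comul) ∘ₗ γ =
      TensorProduct.map γ γ ∘ₗ Coalgebra.comul)
    (hγcounit : (Coalgebra.counit (R := k) (A := U)) ∘ₗ γ = Coalgebra.counit)
    (hγcond : ∀ (m : U) (y : V) {ι κ : Type*} (rm : Coalgebra.Repr k m ι) (ry : Coalgebra.Repr k y κ),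
      ∑ i ∈ rm.index, ∑ j ∈ ry.index,
          p (rm.left i) (ry.right j) • (γ (ry.left j) * rm.right i) =
        ∑ i ∈ rm.index, ∑ j ∈ ry.index,
          p (rm.right i) (ry.left j) • (rm.left i * γ (ry.right j))) :
    (∀ y : V, (piMap γ).lTensor (U ⊗[k] V) (comulCop (thetaMap γ y)) =
        thetaMap γ y ⊗ₜ[k] (1 : U)) ∧
    Function.Injective (thetaMap γ) ∧
    (∀ a : U ⊗[k] V,
      (piMap γ).lTensor (U ⊗[k] V) (comulCop a) = a ⊗ₜ[k] (1 : U) →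
        ∃ y : V, thetaMap γ y = a) :=
  statement9_general γ hγcomul hγcounit
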